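/- arXiv:2204.14206 — 5 statements merged into one kernel-verified Lean document; each statement's English description precedes it below -/
import Mathlib

section
/- For every real x with x > 2, the principal-value integral (1/2π) ∫_{−2}^{2} √(4 − y²)/(x − y) dy equals (x − √(x² − 4))/2. -/
/-!
For `0 < r < x` the integrand `√(r² - t²) / (x - t)` has the elementary primitive
`x · arcsin (t / r) - √(r² - t²) + √(x² - r²) · arcsin u(t)`, where
`u(t) = (r² - x t) / (r (x - t))` is a Möbius map sending `[-r, r]` onto `[-1, 1]`;
the identity `1 - u² = (x² - r²)(r² - t²) / (r (x - t))²` makes the derivative of the last term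
rational in `t` and `√(r² - t²)`. Both arcsines take the values `∓π/2` at `t = ±r`, so the
integral over `[-r, r]` is `π (x - √(x² - r²))`; the theorem is the case `r = 2`.
-/

open Real Set

theorem HasDerivAt.arcsin {f : ℝ → ℝ} {f' t : ℝ} (hf : HasDerivAt f f' t) (ht : f t ^ 2 < 1) :
    HasDerivAt (fun s => arcsin (f s)) (f' / √(1 - f t ^ 2)) t := by
  have hne : f t ≠ -1 ∧ f t ≠ 1 := by
    constructor <;> rintro h <;> rw [h] at ht <;> norm_num at ht
  have h := (hasDerivAt_arcsin hne.1 hne.2).comp t hf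
  rwa [one_div, ← div_eq_inv_mul] at h

section Semicircle

variable {r x t : ℝ}

lemma sqrt_one_sub_div_sq (hr : 0 < r) : √(1 - (t / r) ^ 2) = √(r ^ 2 - t ^ 2) / r := by
  rw [show 1 - (t / r) ^ 2 = (r ^ 2 - t ^ 2) / r ^ 2 by field_simp, sqrt_div' _ (by positivity),
    sqrt_sq hr.le]

lemma sqrt_one_sub_moebius_sq (hr : 0 < r) (hrx : r < x) (ht : t < x) :
    √(1 - ((r ^ 2 - x * t) / (r * (x - t))) ^ 2) =
      √(x ^ 2 - r ^ 2) * √(r ^ 2 - t ^ 2) / (r * (x - t)) := by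
  have hxt : 0 < x - t := by linarith
  rw [show 1 - ((r ^ 2 - x * t) / (r * (x - t))) ^ 2
        = (x ^ 2 - r ^ 2) * (r ^ 2 - t ^ 2) / (r * (x - t)) ^ 2 by field_simp; ring,
    sqrt_div' _ (sq_nonneg _), sqrt_sq (by positivity), sqrt_mul (by nlinarith)]

lemma hasDerivAt_arcsin_div (ht : t ∈ Ioo (-r) r) :
    HasDerivAt (fun t => arcsin (t / r)) (1 / √(r ^ 2 - t ^ 2)) t := by
  have hr : 0 < r := by linarith [ht.1, ht.2]
  have hsq : 0 < √(r ^ 2 - t ^ 2) := sqrt_pos.2 (by nlinarith [ht.1, ht.2])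
  have hlt : (t / r) ^ 2 < 1 := by
    rw [sq_lt_one_iff_abs_lt_one, abs_div, abs_of_pos hr, div_lt_one hr, abs_lt]
    exact ht
  refine (((hasDerivAt_id' t).div_const r).arcsin hlt).congr_deriv ?_
  rw [sqrt_one_sub_div_sq hr]
  field_simp

lemma hasDerivAt_moebius (hr : r ≠ 0) (ht : t ≠ x) :
    HasDerivAt (fun t => (r ^ 2 - x * t) / (r * (x - t)))
      (-(x ^ 2 - r ^ 2) / (r * (x - t) ^ 2)) t := by
  have hxt : x - t ≠ 0 := sub_ne_zero.2 ht.symm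
  have hnum : HasDerivAt (fun t => r ^ 2 - x * t) (-x) t := by
    simpa using ((hasDerivAt_id t).const_mul x).const_sub (r ^ 2)
  have hden : HasDerivAt (fun t => r * (x - t)) (-r) t := by
    simpa using ((hasDerivAt_id t).const_sub x).const_mul r
  refine (hnum.div hden (mul_ne_zero hr hxt)).congr_deriv ?_
  field_simp
  ring

lemma hasDerivAt_arcsin_moebius (hrx : r < x) (ht : t ∈ Ioo (-r) r) :
    HasDerivAt (fun t => arcsin ((r ^ 2 - x * t) / (r * (x - t))))
      (-√(x ^ 2 - r ^ 2) / ((x - t) * √(r ^ 2 - t ^ 2))) t := by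
  obtain ⟨ht₁, ht₂⟩ := ht
  have hr : 0 < r := by linarith
  have hxt : 0 < x - t := by linarith
  have hs : 0 < √(x ^ 2 - r ^ 2) := sqrt_pos.2 (by nlinarith)
  have hsq : 0 < √(r ^ 2 - t ^ 2) := sqrt_pos.2 (by nlinarith)
  have hroot := sqrt_one_sub_moebius_sq hr hrx (t := t) (by linarith)
  have hlt : ((r ^ 2 - x * t) / (r * (x - t))) ^ 2 < 1 := by
    have : 0 < √(1 - ((r ^ 2 - x * t) / (r * (x - t))) ^ 2) := by rw [hroot]; positivity
    linarith [sqrt_pos.1 this]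
  refine ((hasDerivAt_moebius hr.ne' (by linarith : t ≠ x)).arcsin hlt).congr_deriv ?_
  rw [hroot]
  field_simp
  rw [sq_sqrt (by nlinarith)]

noncomputable def semicirclePrimitive (r x t : ℝ) : ℝ :=
  x * arcsin (t / r) - √(r ^ 2 - t ^ 2) +
    √(x ^ 2 - r ^ 2) * arcsin ((r ^ 2 - x * t) / (r * (x - t)))

lemma hasDerivAt_semicirclePrimitive (hrx : r < x) (ht : t ∈ Ioo (-r) r) :
    HasDerivAt (semicirclePrimitive r x) (√(r ^ 2 - t ^ 2) / (x - t)) t := by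
  have hxt : 0 < x - t := by linarith [ht.2]
  have hpos : 0 < r ^ 2 - t ^ 2 := by nlinarith [ht.1, ht.2]
  have hroot : HasDerivAt (fun t => √(r ^ 2 - t ^ 2)) (-t / √(r ^ 2 - t ^ 2)) t := by
    refine (((hasDerivAt_pow 2 t).const_sub (r ^ 2)).sqrt hpos.ne').congr_deriv ?_
    field_simp
    norm_num
  refine ((((hasDerivAt_arcsin_div ht).const_mul x).sub hroot).add
    ((hasDerivAt_arcsin_moebius hrx ht).const_mul _)).congr_deriv ?_
  have hsq : 0 < √(r ^ 2 - t ^ 2) := sqrt_pos.2 hpos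
  field_simp
  rw [sq_sqrt hpos.le, sq_sqrt (by nlinarith [ht.1, ht.2])]
  ring

lemma continuousOn_semicirclePrimitive (hr : 0 < r) (hrx : r < x) :
    ContinuousOn (semicirclePrimitive r x) (Icc (-r) r) := by
  have hxt : ∀ t ∈ Icc (-r) r, r * (x - t) ≠ 0 := fun t ht => by
    have : 0 < x - t := by linarith [ht.2]
    positivity
  unfold semicirclePrimitive
  fun_prop (disch := assumption)

lemma semicirclePrimitive_right (hr : 0 < r) (hrx : r < x) :
    semicirclePrimitive r x r = π / 2 * (x - √(x ^ 2 - r ^ 2)) := by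
  have : (r ^ 2 - x * r) / (r * (x - r)) = -1 := by
    field_simp [(by linarith : x - r ≠ 0)]
    ring
  simp only [semicirclePrimitive, this]
  simp [hr.ne']
  ring

lemma semicirclePrimitive_left (hr : 0 < r) (hrx : r < x) :
    semicirclePrimitive r x (-r) = -(π / 2 * (x - √(x ^ 2 - r ^ 2))) := by
  have : (r ^ 2 - x * -r) / (r * (x - -r)) = 1 := by
    field_simp [(by linarith : x + r ≠ 0)]
    ring
  simp only [semicirclePrimitive, this]
  simp [hr.ne']
  ring

theorem integral_sqrt_sq_sub_sq_div_sub (hr : 0 < r) (hrx : r < x) :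
    ∫ y in -r..r, √(r ^ 2 - y ^ 2) / (x - y) = π * (x - √(x ^ 2 - r ^ 2)) := by
  have hint :
      IntervalIntegrable (fun y => √(r ^ 2 - y ^ 2) / (x - y)) MeasureTheory.volume (-r) r := by
    refine ContinuousOn.intervalIntegrable fun y hy => ?_
    rw [uIcc_of_le (by linarith)] at hy
    have : x - y ≠ 0 := by linarith [hy.2]
    fun_prop (disch := assumption)
  rw [intervalIntegral.integral_eq_sub_of_hasDerivAt_of_le (by linarith)
    (continuousOn_semicirclePrimitive hr hrx)
    (fun t ht => hasDerivAt_semicirclePrimitive hrx ht) hint,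
    semicirclePrimitive_right hr hrx, semicirclePrimitive_left hr hrx]
  ring

end Semicircle

/-- The Stieltjes transform of Wigner's semicircle law: for `x > 2`,
`(1/2π) ∫_{-2}^{2} √(4 - y²)/(x - y) dy = (x - √(x² - 4))/2`. -/
theorem semicircle_stieltjes (x : ℝ) (hx : 2 < x) :
    (1 / (2 * Real.pi)) * ∫ y in (-2 : ℝ)..2, Real.sqrt (4 - y ^ 2) / (x - y) =
      (x - Real.sqrt (x ^ 2 - 4)) / 2 := by
  have h := integral_sqrt_sq_sub_sq_div_sub two_pos hx
  norm_num at h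
  rw [h]
  field_simp
end

section
/- For γ > 0 and t₄, t₆, m₂ ∈ ℝ, define the hexic spectral density ρ(x) = (1/2π)( t₆x⁴ + (t₄ + 2t₆γ² + 10t₆m₂)x² + (1/γ² − t₄γ² − 4t₆γ⁴ − 10t₆γ²m₂) )√(4γ² − x²) for x ∈ [−2γ, 2γ] (and ρ = 0 outside). Then ∫_{−2γ}^{2γ} ρ(x) dx = 1 for all values of t₄, t₆, m₂ and all γ > 0. -/
open Real intervalIntegral Set

/-!
Substituting `x = 2γy` turns `ρ` into an even quartic polynomial against the semicircle
`√(1 - y²)`, whose moments `∫ y^(2k) √(1 - y²) = π/2, π/8, π/16` (`k = 0, 1, 2`) come from the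
elementary antiderivative `arcsin y + √(1 - y²) · (odd quintic)`. With these moments the
contributions of `t₄`, `t₆` and `m₂` cancel identically, leaving `γ² · (1/γ²) = 1`.
-/

theorem hasDerivAt_semicircle_quartic_antideriv (a b c : ℝ) {x : ℝ} (hx : x ∈ Ioo (-1 : ℝ) 1) :
    HasDerivAt
      (fun x => (a / 16 + b / 8 + c / 2) * arcsin x +
        √(1 - x ^ 2) * (a / 6 * x ^ 5 + (b / 4 - a / 24) * x ^ 3 + (c / 2 - b / 8 - a / 16) * x))
      ((a * x ^ 4 + b * x ^ 2 + c) * √(1 - x ^ 2)) x := by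
  have hs : 0 < 1 - x ^ 2 := by nlinarith [hx.1, hx.2]
  have hsq : √(1 - x ^ 2) ^ 2 = 1 - x ^ 2 := sq_sqrt hs.le
  have hroot : HasDerivAt (fun x => √(1 - x ^ 2)) (-(2 * x) / (2 * √(1 - x ^ 2))) x := by
    simpa using ((hasDerivAt_pow 2 x).const_sub 1).sqrt hs.ne'
  have hpoly : HasDerivAt
      (fun x => a / 6 * x ^ 5 + (b / 4 - a / 24) * x ^ 3 + (c / 2 - b / 8 - a / 16) * x)
      (a / 6 * (5 * x ^ 4) + (b / 4 - a / 24) * (3 * x ^ 2) + (c / 2 - b / 8 - a / 16) * 1) x :=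
    (((hasDerivAt_pow 5 x).const_mul (a / 6)).add
      ((hasDerivAt_pow 3 x).const_mul (b / 4 - a / 24))).add
      ((hasDerivAt_id' x).const_mul (c / 2 - b / 8 - a / 16))
  refine (((hasDerivAt_arcsin (by linarith [hx.1]) (by linarith [hx.2])).const_mul
    (a / 16 + b / 8 + c / 2)).add (hroot.mul hpoly)).congr_deriv ?_
  field_simp
  rw [hsq]
  ring

theorem integral_quartic_mul_sqrt_one_sub_sq (a b c : ℝ) :
    ∫ x in (-1 : ℝ)..1, (a * x ^ 4 + b * x ^ 2 + c) * √(1 - x ^ 2)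
      = (a / 16 + b / 8 + c / 2) * π := by
  rw [integral_eq_sub_of_hasDerivAt_of_le (by norm_num) (by fun_prop)
    (fun x hx => hasDerivAt_semicircle_quartic_antideriv a b c hx)
    (Continuous.intervalIntegrable (by fun_prop) _ _)]
  simp [arcsin_one]
  ring

theorem integral_mul_sqrt_sq_sub_sq (f : ℝ → ℝ) {r : ℝ} (hr : 0 < r) :
    ∫ x in -r..r, f x * √(r ^ 2 - x ^ 2)
      = r ^ 2 * ∫ x in (-1 : ℝ)..1, f (r * x) * √(1 - x ^ 2) := by
  have hsqrt (x : ℝ) : √(r ^ 2 - (r * x) ^ 2) = r * √(1 - x ^ 2) := by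
    rw [show r ^ 2 - (r * x) ^ 2 = r ^ 2 * (1 - x ^ 2) by ring, sqrt_mul (sq_nonneg r),
      sqrt_sq hr.le]
  have hscale := integral_comp_mul_left (fun x => f x * √(r ^ 2 - x ^ 2)) hr.ne' (a := -1) (b := 1)
  simp only [hsqrt, mul_neg, mul_one, smul_eq_mul, mul_left_comm _ r, integral_const_mul] at hscale
  field_simp at hscale
  linear_combination -hscale

theorem integral_quartic_mul_sqrt_sq_sub_sq (a b c : ℝ) {r : ℝ} (hr : 0 < r) :
    ∫ x in -r..r, (a * x ^ 4 + b * x ^ 2 + c) * √(r ^ 2 - x ^ 2)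
      = (a * r ^ 6 / 16 + b * r ^ 4 / 8 + c * r ^ 2 / 2) * π := by
  rw [integral_mul_sqrt_sq_sub_sq _ hr]
  simp only [mul_pow, ← mul_assoc, integral_quartic_mul_sqrt_one_sub_sq]
  ring

/-- Normalization of the hexic spectral density: for all `γ > 0`, `t₄`, `t₆`, `m₂`,
`∫_{-2γ}^{2γ} ρ(x) dx = 1`. -/
theorem hexic_density_normalized (γ t₄ t₆ m₂ : ℝ) (hγ : 0 < γ) :
    ∫ x in (-(2 * γ))..(2 * γ),
        (1 / (2 * Real.pi)) *
          (t₆ * x ^ 4 + (t₄ + 2 * t₆ * γ ^ 2 + 10 * t₆ * m₂) * x ^ 2 +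
            (1 / γ ^ 2 - t₄ * γ ^ 2 - 4 * t₆ * γ ^ 4 - 10 * t₆ * γ ^ 2 * m₂)) *
          Real.sqrt (4 * γ ^ 2 - x ^ 2) = 1 := by
  simp only [mul_assoc (1 / (2 * π)), integral_const_mul]
  rw [show 4 * γ ^ 2 = (2 * γ) ^ 2 by ring,
    integral_quartic_mul_sqrt_sq_sub_sq _ _ _ (by positivity : 0 < 2 * γ)]
  field_simp
  ring
end

section
/- For γ > 0 and t₄, t₆, m₂ ∈ ℝ, define the hexic spectral density ρ(x) = (1/2π)( t₆x⁴ + (t₄ + 2t₆γ² + 10t₆m₂)x² + (1/γ² − t₄γ² − 4t₆γ⁴ − 10t₆γ²m₂) )√(4γ² − x²) for x ∈ [−2γ, 2γ] (and ρ = 0 outside). Assume 10t₆γ⁶ ≠ 1. Then the self-consistency condition ∫_{−2γ}^{2γ} x² ρ(x) dx = m₂ holds if and only if m₂ = −γ²(5t₆γ⁶ + t₄γ⁴ + 1)/(10t₆γ⁶ − 1). -/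
/-!
The second moment of `ρ` is a combination of the semicircle moments
`Mₙ(r) = ∫_{-r}^{r} xⁿ √(r² - x²) dx` for `n = 2, 4, 6`. These follow from `M₀(r) = π r² / 2`
and the reduction `(n + 4) Mₙ₊₂ = (n + 1) r² Mₙ`. At `r = 2γ` the second moment is
`γ² + t₄γ⁶ + 5t₆γ⁸ + 10t₆γ⁶ m₂`, affine in `m₂` with slope `10t₆γ⁶`, so the self-consistency
equation is linear with nonzero leading coefficient `10t₆γ⁶ - 1`.
-/

open Real intervalIntegral

noncomputable def semicircleMoment (r : ℝ) (n : ℕ) : ℝ :=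
  ∫ x in -r..r, x ^ n * √(r ^ 2 - x ^ 2)

theorem semicircleMoment_zero {r : ℝ} (hr : 0 ≤ r) : semicircleMoment r 0 = π * r ^ 2 / 2 := by
  rcases hr.eq_or_lt with rfl | hr
  · simp [semicircleMoment]
  have hscale (x : ℝ) : √(r ^ 2 - (r * x) ^ 2) = r * √(1 - x ^ 2) := by
    rw [show r ^ 2 - (r * x) ^ 2 = r ^ 2 * (1 - x ^ 2) by ring, sqrt_mul (sq_nonneg r),
      sqrt_sq hr.le]
  have := integral_comp_mul_left (fun x => √(r ^ 2 - x ^ 2)) (a := -1) (b := 1) hr.ne'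
  simp only [hscale, integral_const_mul, integral_sqrt_one_sub_sq, mul_neg, mul_one,
    smul_eq_mul] at this
  simp only [semicircleMoment, pow_zero, one_mul]
  rw [← mul_right_inj' (inv_ne_zero hr.ne'), ← this]
  field_simp

theorem hasDerivAt_pow_succ_mul_sub_sq_mul_sqrt (r : ℝ) (n : ℕ) {x : ℝ} (hx : x ^ 2 < r ^ 2) :
    HasDerivAt (fun x => x ^ (n + 1) * ((r ^ 2 - x ^ 2) * √(r ^ 2 - x ^ 2)))
      ((n + 1) * r ^ 2 * (x ^ n * √(r ^ 2 - x ^ 2))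
        - (n + 4) * (x ^ (n + 2) * √(r ^ 2 - x ^ 2))) x := by
  have hpos : 0 < r ^ 2 - x ^ 2 := sub_pos.mpr hx
  have hinner : HasDerivAt (fun x => r ^ 2 - x ^ 2) (-(2 * x)) x := by
    simpa using (hasDerivAt_pow 2 x).const_sub (r ^ 2)
  refine ((hasDerivAt_pow (n + 1) x).mul (hinner.mul (hinner.sqrt hpos.ne'))).congr_deriv ?_
  have hs := mul_self_sqrt hpos.le
  have hs0 := (sqrt_pos.mpr hpos).ne'
  simp only [Pi.mul_apply]
  field_simp
  push_cast
  linear_combination x ^ n * x ^ 2 * hs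

theorem semicircleMoment_add_two {r : ℝ} (hr : 0 ≤ r) (n : ℕ) :
    (n + 4) * semicircleMoment r (n + 2) = (n + 1) * r ^ 2 * semicircleMoment r n := by
  -- integrate the derivative of `x ^ (n + 1) * (r² - x²) ^ (3/2)`, which vanishes at `±r`
  have hcont : Continuous fun x : ℝ => x ^ n * √(r ^ 2 - x ^ 2) := by fun_prop
  have hcont_add_two : Continuous fun x : ℝ => x ^ (n + 2) * √(r ^ 2 - x ^ 2) := by fun_prop
  have hftc := integral_eq_sub_of_hasDerivAt_of_le (neg_le_self hr)
    (by fun_prop) (fun x hx => hasDerivAt_pow_succ_mul_sub_sq_mul_sqrt r n (sq_lt_sq' hx.1 hx.2))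
    (((hcont.intervalIntegrable _ _).const_mul _).sub ((hcont_add_two.intervalIntegrable _ _).const_mul _))
  rw [integral_sub ((hcont.intervalIntegrable _ _).const_mul _)
    ((hcont_add_two.intervalIntegrable _ _).const_mul _), integral_const_mul, integral_const_mul] at hftc
  simp only [neg_sq, sub_self, zero_mul, mul_zero] at hftc
  simp only [semicircleMoment]
  linear_combination -hftc

theorem semicircleMoment_two {r : ℝ} (hr : 0 ≤ r) : semicircleMoment r 2 = π * r ^ 4 / 8 := by
  have h := semicircleMoment_add_two hr 0
  rw [semicircleMoment_zero hr] at h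
  push_cast at h
  linear_combination h / 4

theorem semicircleMoment_four {r : ℝ} (hr : 0 ≤ r) : semicircleMoment r 4 = π * r ^ 6 / 16 := by
  have h := semicircleMoment_add_two hr 2
  rw [semicircleMoment_two hr] at h
  push_cast at h
  linear_combination h / 6

theorem semicircleMoment_six {r : ℝ} (hr : 0 ≤ r) : semicircleMoment r 6 = 5 * π * r ^ 8 / 128 := by
  have h := semicircleMoment_add_two hr 4
  rw [semicircleMoment_four hr] at h
  push_cast at h
  linear_combination h / 8

theorem integral_even_sextic_mul_sqrt {r : ℝ} (hr : 0 ≤ r) (a b c : ℝ) :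
    ∫ x in -r..r, (a * x ^ 6 + b * x ^ 4 + c * x ^ 2) * √(r ^ 2 - x ^ 2)
      = π * r ^ 4 * (c / 8 + b * r ^ 2 / 16 + 5 * a * r ^ 4 / 128) := by
  have hint (n : ℕ) (d : ℝ) :
      IntervalIntegrable (fun x => d * (x ^ n * √(r ^ 2 - x ^ 2))) MeasureTheory.volume (-r) r :=
    (by fun_prop : Continuous _).intervalIntegrable _ _
  simp only [add_mul, mul_assoc]
  rw [integral_add ((hint 6 a).add (hint 4 b)) (hint 2 c), integral_add (hint 6 a) (hint 4 b),
    integral_const_mul, integral_const_mul, integral_const_mul]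
  change a * semicircleMoment r 6 + b * semicircleMoment r 4 + c * semicircleMoment r 2 = _
  rw [semicircleMoment_six hr, semicircleMoment_four hr, semicircleMoment_two hr]
  ring

/-- Self-consistency of the second moment of the hexic spectral density:
assuming `10t₆γ⁶ ≠ 1`, `∫ x² ρ(x) dx = m₂` iff
`m₂ = -γ²(5t₆γ⁶ + t₄γ⁴ + 1)/(10t₆γ⁶ - 1)`. -/
theorem hexic_second_moment_selfconsistency (γ t₄ t₆ m₂ : ℝ) (hγ : 0 < γ)
    (h : 10 * t₆ * γ ^ 6 ≠ 1) :
    (∫ x in (-(2 * γ))..(2 * γ),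
        x ^ 2 * ((1 / (2 * Real.pi)) *
          (t₆ * x ^ 4 + (t₄ + 2 * t₆ * γ ^ 2 + 10 * t₆ * m₂) * x ^ 2 +
            (1 / γ ^ 2 - t₄ * γ ^ 2 - 4 * t₆ * γ ^ 4 - 10 * t₆ * γ ^ 2 * m₂)) *
          Real.sqrt (4 * γ ^ 2 - x ^ 2)) = m₂) ↔
      m₂ = -(γ ^ 2 * (5 * t₆ * γ ^ 6 + t₄ * γ ^ 4 + 1)) / (10 * t₆ * γ ^ 6 - 1) := by
  set B := t₄ + 2 * t₆ * γ ^ 2 + 10 * t₆ * m₂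
  set C := 1 / γ ^ 2 - t₄ * γ ^ 2 - 4 * t₆ * γ ^ 4 - 10 * t₆ * γ ^ 2 * m₂
  have hintegrand (x : ℝ) :
      x ^ 2 * ((1 / (2 * π)) * (t₆ * x ^ 4 + B * x ^ 2 + C) * √(4 * γ ^ 2 - x ^ 2)) =
        (1 / (2 * π)) * ((t₆ * x ^ 6 + B * x ^ 4 + C * x ^ 2) * √((2 * γ) ^ 2 - x ^ 2)) := by
    rw [mul_pow, show (2 : ℝ) ^ 2 = 4 by norm_num]
    ring
  have hsecond : (∫ x in (-(2 * γ))..(2 * γ),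
      x ^ 2 * ((1 / (2 * π)) * (t₆ * x ^ 4 + B * x ^ 2 + C) * √(4 * γ ^ 2 - x ^ 2)))
        = γ ^ 2 + t₄ * γ ^ 6 + 5 * t₆ * γ ^ 8 + 10 * t₆ * γ ^ 6 * m₂ := by
    simp only [hintegrand, integral_const_mul,
      integral_even_sextic_mul_sqrt (by positivity : 0 ≤ 2 * γ), B, C]
    field_simp
    ring
  rw [hsecond, eq_div_iff (sub_ne_zero.mpr h)]
  constructor <;> intro hm <;> linear_combination hm
end

section
/- For γ > 0 and α, t₃ ∈ ℝ, define the cubic spectral density ρ(x) = (1/2π)(1/γ² + t₃(x − α))√(4γ² − (x − α)²) for x ∈ [α − 2γ, α + 2γ] (and ρ = 0 outside). Then the first moment satisfies ∫_{α−2γ}^{α+2γ} x ρ(x) dx = α + t₃γ⁴. -/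
/-!
Centring at `α` turns `x ρ(x)` into a quadratic in `y = x - α` against the semicircle weight
`√(4γ² - y²)`. The substitution `y = 2γ sin θ` reduces its integral to `∫ cos² = π/2`,
`∫ sin cos² = 0` and `∫ sin² cos² = π/8` over `[-π/2, π/2]`; the odd term vanishes.
-/

open Real intervalIntegral

theorem integral_mul_sqrt_sq_sub_sq_eq_integral_sin {r : ℝ} (hr : 0 ≤ r) {g : ℝ → ℝ}
    (hg : Continuous g) :
    ∫ y in -r..r, g y * √(r ^ 2 - y ^ 2) =
      ∫ θ in -(π / 2)..(π / 2), g (r * sin θ) * (r * cos θ) ^ 2 := by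
  have hsub := integral_comp_mul_deriv (a := -(π / 2)) (b := π / 2) (f := fun θ => r * sin θ)
    (f' := fun θ => r * cos θ) (g := fun y => g y * √(r ^ 2 - y ^ 2))
    (fun θ _ => (hasDerivAt_sin θ).const_mul r) (by fun_prop) (by fun_prop)
  simp only [Function.comp_def, sin_neg, sin_pi_div_two, mul_neg, mul_one] at hsub
  rw [← hsub]
  refine integral_congr fun θ hθ => ?_
  rw [Set.uIcc_of_le (by linarith [pi_pos])] at hθ
  have hsqrt : √(r ^ 2 - (r * sin θ) ^ 2) = r * cos θ := by
    rw [← sqrt_sq (mul_nonneg hr (cos_nonneg_of_mem_Icc hθ))]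
    congr 1
    nlinarith [sin_sq_add_cos_sq θ]
  simp only [hsqrt]
  ring

theorem integral_quadratic_mul_sqrt_sq_sub_sq {r : ℝ} (hr : 0 ≤ r) (a b c : ℝ) :
    ∫ y in -r..r, (a + b * y + c * y ^ 2) * √(r ^ 2 - y ^ 2) =
      π * r ^ 2 * (a + c * r ^ 2 / 4) / 2 := by
  rw [integral_mul_sqrt_sq_sub_sq_eq_integral_sin hr (by fun_prop)]
  have hcos : ∫ θ in -(π / 2)..(π / 2), cos θ ^ 2 = π / 2 := by
    rw [integral_cos_sq]; simp
  have hsin_cos : ∫ θ in -(π / 2)..(π / 2), sin θ * cos θ ^ 2 = 0 := by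
    rw [integral_sin_mul_cos_sq]; simp
  have hsin_sq_cos : ∫ θ in -(π / 2)..(π / 2), sin θ ^ 2 * cos θ ^ 2 = π / 8 := by
    rw [integral_sin_sq_mul_cos_sq, show 4 * (π / 2) = 2 * π by ring,
      show 4 * -(π / 2) = -(2 * π) by ring, sin_neg, sin_two_pi]
    ring
  have hexpand : (fun θ => (a + b * (r * sin θ) + c * (r * sin θ) ^ 2) * (r * cos θ) ^ 2) =
      fun θ => r ^ 2 * a * cos θ ^ 2 + r ^ 3 * b * (sin θ * cos θ ^ 2)
        + r ^ 4 * c * (sin θ ^ 2 * cos θ ^ 2) := by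
    ext θ; ring
  have hint {f : ℝ → ℝ} (hf : Continuous f) : IntervalIntegrable f MeasureTheory.volume
      (-(π / 2)) (π / 2) := hf.intervalIntegrable _ _
  rw [hexpand, integral_add (hint (by fun_prop)) (hint (by fun_prop)),
    integral_add (hint (by fun_prop)) (hint (by fun_prop)), integral_const_mul, integral_const_mul,
    integral_const_mul, hcos, hsin_cos, hsin_sq_cos]
  ring

/-- First moment of the cubic spectral density:
`∫_{α-2γ}^{α+2γ} x ρ(x) dx = α + t₃γ⁴`. -/
theorem cubic_density_first_moment (γ α t₃ : ℝ) (hγ : 0 < γ) :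
    ∫ x in (α - 2 * γ)..(α + 2 * γ),
        x * ((1 / (2 * Real.pi)) * (1 / γ ^ 2 + t₃ * (x - α)) *
          Real.sqrt (4 * γ ^ 2 - (x - α) ^ 2)) = α + t₃ * γ ^ 4 := by
  set a := α / (2 * π * γ ^ 2)
  set b := (1 / γ ^ 2 + α * t₃) / (2 * π)
  set c := t₃ / (2 * π)
  calc _ = ∫ x in (α - 2 * γ)..(α + 2 * γ),
          (a + b * (x - α) + c * (x - α) ^ 2) * √((2 * γ) ^ 2 - (x - α) ^ 2) := by
        refine integral_congr fun x _ => ?_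
        simp only [a, b, c]
        field_simp
        ring_nf
    _ = ∫ y in -(2 * γ)..(2 * γ), (a + b * y + c * y ^ 2) * √((2 * γ) ^ 2 - y ^ 2) := by
        rw [integral_comp_sub_right (fun y => (a + b * y + c * y ^ 2) * √((2 * γ) ^ 2 - y ^ 2))]
        ring_nf
    _ = π * (2 * γ) ^ 2 * (a + c * (2 * γ) ^ 2 / 4) / 2 :=
        integral_quadratic_mul_sqrt_sq_sub_sq (by positivity) a b c
    _ = α + t₃ * γ ^ 4 := by
        simp only [a, c]
        field_simp [pi_pos.ne']
        ring
end

section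
/- For γ > 0 and α, t₃ ∈ ℝ, define the cubic spectral density ρ(x) = (1/2π)(1/γ² + t₃(x − α))√(4γ² − (x − α)²) for x ∈ [α − 2γ, α + 2γ] (and ρ = 0 outside). Then the second moment satisfies ∫_{α−2γ}^{α+2γ} x² ρ(x) dx = α² + γ² + 2αt₃γ⁴. -/
open Real intervalIntegral

/-- Substitution `x = sin θ` for moments of the semicircle on `[-1,1]`. -/
lemma mom_eq_trig (k : ℕ) :
    ∫ x in (-1 : ℝ)..1, x ^ k * Real.sqrt (1 - x ^ 2) =
      ∫ θ in (-(π / 2))..(π / 2), Real.sin θ ^ k * Real.cos θ ^ 2 := by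
  calc
    _ = ∫ x in Real.sin (-(π / 2))..Real.sin (π / 2), x ^ k * Real.sqrt (1 - x ^ 2) := by
          rw [Real.sin_neg, Real.sin_pi_div_two]
    _ = ∫ θ in (-(π / 2))..(π / 2),
          (Real.sin θ ^ k * Real.sqrt (1 - Real.sin θ ^ 2)) * Real.cos θ :=
        (integral_comp_mul_deriv (fun x _ => Real.hasDerivAt_sin x) continuousOn_cos
          (by fun_prop)).symm
    _ = ∫ θ in (-(π / 2))..(π / 2), Real.sin θ ^ k * Real.cos θ ^ 2 := by
        refine integral_congr_ae (MeasureTheory.ae_of_all _ fun θ h => ?_)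
        rw [Set.uIoc_of_le (neg_le_self (le_of_lt (half_pos Real.pi_pos))), Set.mem_Ioc] at h
        rw [← Real.cos_eq_sqrt_one_sub_sin_sq (le_of_lt h.1) h.2]
        ring

lemma mom0 : ∫ x in (-1 : ℝ)..1, x ^ 0 * Real.sqrt (1 - x ^ 2) = π / 2 := by
  simpa using integral_sqrt_one_sub_sq

lemma mom1 : ∫ x in (-1 : ℝ)..1, x ^ 1 * Real.sqrt (1 - x ^ 2) = 0 := by
  rw [mom_eq_trig]
  simp [pow_one]

lemma mom2 : ∫ x in (-1 : ℝ)..1, x ^ 2 * Real.sqrt (1 - x ^ 2) = π / 8 := by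
  rw [mom_eq_trig, integral_sin_sq_mul_cos_sq]
  have h1 : 4 * (π / 2) = 2 * π := by ring
  have h2 : 4 * (-(π / 2)) = -(2 * π) := by ring
  rw [h1, h2, Real.sin_neg, Real.sin_two_pi]
  ring

lemma mom3 : ∫ x in (-1 : ℝ)..1, x ^ 3 * Real.sqrt (1 - x ^ 2) = 0 := by
  rw [mom_eq_trig]
  have := @integral_sin_pow_odd_mul_cos_pow (-(π / 2)) (π / 2) 1 2
  norm_num at this
  exact this

/-- Scaling of semicircle moments. -/
lemma mom_scaled (r : ℝ) (hr : 0 < r) (k : ℕ) :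
    ∫ u in (-r)..r, u ^ k * Real.sqrt (r ^ 2 - u ^ 2) =
      r ^ (k + 2) * ∫ x in (-1 : ℝ)..1, x ^ k * Real.sqrt (1 - x ^ 2) := by
  have h := smul_integral_comp_mul_right (fun u => u ^ k * Real.sqrt (r ^ 2 - u ^ 2))
    (a := (-1 : ℝ)) (b := 1) r
  rw [neg_one_mul, one_mul] at h
  rw [← h]
  have : ∀ x : ℝ, (x * r) ^ k * Real.sqrt (r ^ 2 - (x * r) ^ 2) =
      r ^ (k + 1) * (x ^ k * Real.sqrt (1 - x ^ 2)) := by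
    intro x
    have : r ^ 2 - (x * r) ^ 2 = r ^ 2 * (1 - x ^ 2) := by ring
    rw [this, Real.sqrt_mul (sq_nonneg r), Real.sqrt_sq hr.le]
    ring
  simp_rw [this, integral_const_mul, smul_eq_mul]
  ring

/-- Second moment of the cubic spectral density:
`∫_{α-2γ}^{α+2γ} x² ρ(x) dx = α² + γ² + 2αt₃γ⁴`. -/
theorem cubic_density_second_moment (γ α t₃ : ℝ) (hγ : 0 < γ) :
    ∫ x in (α - 2 * γ)..(α + 2 * γ),
        x ^ 2 * ((1 / (2 * Real.pi)) * (1 / γ ^ 2 + t₃ * (x - α)) *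
          Real.sqrt (4 * γ ^ 2 - (x - α) ^ 2)) = α ^ 2 + γ ^ 2 + 2 * α * t₃ * γ ^ 4 := by
  have hr : (0 : ℝ) < 2 * γ := by linarith
  set F : ℝ → ℝ := fun x => x ^ 2 * ((1 / (2 * Real.pi)) * (1 / γ ^ 2 + t₃ * (x - α)) *
    Real.sqrt (4 * γ ^ 2 - (x - α) ^ 2)) with hF
  have hshift : (∫ u in (-(2 * γ))..(2 * γ), F (u + α)) =
      ∫ x in (α - 2 * γ)..(α + 2 * γ), F x := by
    rw [integral_comp_add_right F α]
    congr 1 <;> ring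
  rw [← hshift]
  have hsq : ∀ u : ℝ, (2 * γ) ^ 2 - u ^ 2 = 4 * γ ^ 2 - u ^ 2 := by intro u; ring
  have hFu : ∀ u : ℝ, F (u + α) =
      (1 / (2 * Real.pi)) * (t₃ * (u ^ 3 * Real.sqrt ((2 * γ) ^ 2 - u ^ 2))
        + (1 / γ ^ 2 + 2 * α * t₃) * (u ^ 2 * Real.sqrt ((2 * γ) ^ 2 - u ^ 2))
        + (2 * α / γ ^ 2 + α ^ 2 * t₃) * (u ^ 1 * Real.sqrt ((2 * γ) ^ 2 - u ^ 2))
        + (α ^ 2 / γ ^ 2) * (u ^ 0 * Real.sqrt ((2 * γ) ^ 2 - u ^ 2))) := by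
    intro u
    rw [hF]
    simp only [add_sub_cancel_right, hsq]
    ring
  simp_rw [hFu]
  have hcont : ∀ k : ℕ, Continuous fun u : ℝ => u ^ k * Real.sqrt ((2 * γ) ^ 2 - u ^ 2) := by
    intro k; fun_prop
  have hint : ∀ (c : ℝ) (k : ℕ), IntervalIntegrable
      (fun u : ℝ => c * (u ^ k * Real.sqrt ((2 * γ) ^ 2 - u ^ 2)))
      MeasureTheory.volume (-(2 * γ)) (2 * γ) := by
    intro c k
    exact (continuous_const.mul (hcont k)).intervalIntegrable _ _
  rw [integral_const_mul]
  rw [integral_add (((hint _ 3).add (hint _ 2)).add (hint _ 1)) (hint _ 0),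
    integral_add ((hint _ 3).add (hint _ 2)) (hint _ 1),
    integral_add (hint _ 3) (hint _ 2)]
  simp_rw [integral_const_mul]
  rw [mom_scaled _ hr 0, mom_scaled _ hr 1, mom_scaled _ hr 2, mom_scaled _ hr 3,
    mom0, mom1, mom2, mom3]
  have hπ : Real.pi ≠ 0 := Real.pi_ne_zero
  have hγ' : γ ≠ 0 := ne_of_gt hγ
  field_simp
  ring
end
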